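/- arXiv:1902.08493 — 2 statements merged into one kernel-verified Lean document; each statement's English description precedes it below -/
import Mathlib

section
/- Let X be an infinite, locally finite, connected simple graph with a graph height function (h,Γ) such that Γ acts transitively on X, and let d = d(h,Γ). Then for all n ≥ 0: h_n ≤ P_D(dn) · Σ_{m=0}^{n} b_m · b̄_{n−m}. -/
open Filter Finset

noncomputable section

variable {V : Type*}

/-- `w : ℕ → V` represents a walk of length `n` from `v`: consecutive vertices are
adjacent and the values are pinned to `w n` from index `n` on. -/
noncomputable def IsWalkFrom (G : SimpleGraph V) (n : ℕ) (v : V) (w : ℕ → V) : Prop :=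
  w 0 = v ∧ (∀ i < n, G.Adj (w i) (w (i + 1))) ∧ (∀ i, n ≤ i → w i = w n)

/-- A self-avoiding walk of length `n` starting at `v`. -/
noncomputable def IsSAWFrom (G : SimpleGraph V) (n : ℕ) (v : V) (w : ℕ → V) : Prop :=
  IsWalkFrom G n v w ∧ Set.InjOn w (Set.Iic n)

/-- A bridge with respect to the height function `h`. -/
noncomputable def IsBridgeFrom (G : SimpleGraph V) (h : V → ℤ) (n : ℕ) (v : V) (w : ℕ → V) : Prop :=
  IsSAWFrom G n v w ∧ ∀ i, 1 ≤ i → i ≤ n → h (w 0) < h (w i) ∧ h (w i) ≤ h (w n)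

/-- A reversed bridge with respect to the height function `h`. -/
noncomputable def IsRBridgeFrom (G : SimpleGraph V) (h : V → ℤ) (n : ℕ) (v : V) (w : ℕ → V) : Prop :=
  IsSAWFrom G n v w ∧ ∀ i, 1 ≤ i → i ≤ n → h (w 0) > h (w i) ∧ h (w i) ≥ h (w n)

/-- A half-space walk with respect to the height function `h`. -/
noncomputable def IsHSWFrom (G : SimpleGraph V) (h : V → ℤ) (n : ℕ) (v : V) (w : ℕ → V) : Prop :=
  IsSAWFrom G n v w ∧ ∀ i, 1 ≤ i → i ≤ n → h (w 0) < h (w i)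

/-- The span of (the first `n+1` vertices of) a walk. -/
noncomputable def walkSpan (h : V → ℤ) (n : ℕ) (w : ℕ → V) : ℤ :=
  ((Finset.range (n + 1)).sup' ⟨0, by simp⟩ fun i => h (w i)) -
    ((Finset.range (n + 1)).inf' ⟨0, by simp⟩ fun i => h (w i))

/-- Number of SAWs of length `n` starting at `v`. -/
noncomputable def sawCount (G : SimpleGraph V) (n : ℕ) (v : V) : ℕ :=
  Nat.card {w : ℕ → V // IsSAWFrom G n v w}

/-- Number of bridges of length `n` starting at `v`. -/
noncomputable def bridgeCount (G : SimpleGraph V) (h : V → ℤ) (n : ℕ) (v : V) : ℕ :=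
  Nat.card {w : ℕ → V // IsBridgeFrom G h n v w}

/-- Number of reversed bridges of length `n` starting at `v`. -/
noncomputable def rbridgeCount (G : SimpleGraph V) (h : V → ℤ) (n : ℕ) (v : V) : ℕ :=
  Nat.card {w : ℕ → V // IsRBridgeFrom G h n v w}

/-- Number of half-space walks of length `n` starting at `v`. -/
noncomputable def hswCount (G : SimpleGraph V) (h : V → ℤ) (n : ℕ) (v : V) : ℕ :=
  Nat.card {w : ℕ → V // IsHSWFrom G h n v w}

/-- Number of bridges of length `n` and span `a` starting at `v`. -/
noncomputable def bridgeSpanCount (G : SimpleGraph V) (h : V → ℤ) (n : ℕ) (v : V) (a : ℤ) : ℕ :=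
  Nat.card {w : ℕ → V // IsBridgeFrom G h n v w ∧ walkSpan h n w = a}

/-- Number of reversed bridges of length `n` and span `a` starting at `v`. -/
noncomputable def rbridgeSpanCount (G : SimpleGraph V) (h : V → ℤ) (n : ℕ) (v : V) (a : ℤ) : ℕ :=
  Nat.card {w : ℕ → V // IsRBridgeFrom G h n v w ∧ walkSpan h n w = a}

/-- `c_n`: maximal number of SAWs of length `n` over all starting vertices. -/
noncomputable def sawSup (G : SimpleGraph V) (n : ℕ) : ℕ :=
  sSup {m | ∃ v : V, m = sawCount G n v}

/-- `b_n`: minimal number of bridges of length `n` over all starting vertices. -/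
noncomputable def bridgeInf (G : SimpleGraph V) (h : V → ℤ) (n : ℕ) : ℕ :=
  sInf {m | ∃ v : V, m = bridgeCount G h n v}

/-- `b̄_n`: minimal number of reversed bridges of length `n` over all starting vertices. -/
noncomputable def rbridgeInf (G : SimpleGraph V) (h : V → ℤ) (n : ℕ) : ℕ :=
  sInf {m | ∃ v : V, m = rbridgeCount G h n v}

/-- `idx` together with the spans `a` form the canonical decomposition of the walk `w`
of length `n` into an alternating sequence of `k` bridges and reversed bridges. -/
noncomputable def IsCanonicalDecomp (h : V → ℤ) (n : ℕ) (w : ℕ → V) (k : ℕ) (a : ℕ → ℤ)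
    (idx : ℕ → ℕ) : Prop :=
  idx 0 = 0 ∧ idx k = n ∧
  ∀ j, 1 ≤ j → j ≤ k →
    idx (j - 1) < idx j ∧ idx j ≤ n ∧
    a j = |h (w (idx j)) - h (w (idx (j - 1)))| ∧
    (∀ i, idx (j - 1) ≤ i → i ≤ n → |h (w i) - h (w (idx (j - 1)))| ≤ a j) ∧
    (∀ i, idx j < i → i ≤ n → |h (w i) - h (w (idx (j - 1)))| < a j)

/-- `h_{n,v}(a_1,…,a_k)`: number of half-space walks of length `n` from `v` whose
canonical decomposition has span sequence `a 1, …, a k`. -/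
noncomputable def hswSeqCount (G : SimpleGraph V) (h : V → ℤ) (n : ℕ) (v : V) (k : ℕ)
    (a : ℕ → ℤ) : ℕ :=
  Nat.card {w : ℕ → V // IsHSWFrom G h n v w ∧ ∃ idx : ℕ → ℕ,
    IsCanonicalDecomp h n w k a idx}

/-- The group `Γ` acts quasi-transitively. -/
noncomputable def QuasiTransitiveSub (G : SimpleGraph V) (Γ : Subgroup (G ≃g G)) : Prop :=
  ∃ S : Finset V, ∀ v : V, ∃ γ ∈ Γ, ∃ s ∈ S, γ s = v

/-- The graph `G` is quasi-transitive. -/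
noncomputable def QuasiTransitive (G : SimpleGraph V) : Prop :=
  ∃ S : Finset V, ∀ v : V, ∃ γ : G ≃g G, ∃ s ∈ S, γ s = v

/-- `(h, Γ)` is a graph height function on `G`. -/
noncomputable def IsGraphHeightFunction (G : SimpleGraph V) (h : V → ℤ) (Γ : Subgroup (G ≃g G)) : Prop :=
  QuasiTransitiveSub G Γ ∧
  (∀ γ ∈ Γ, ∀ u v : V, h (γ v) - h (γ u) = h v - h u) ∧
  (∀ v : V, ∃ u w : V, G.Adj v u ∧ G.Adj v w ∧ h u < h v ∧ h v < h w)

/-- `P_D A`: number of partitions of `A` into distinct parts. -/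
noncomputable def distinctPartitionCount (A : ℕ) : ℕ := (Nat.Partition.distincts A).card

noncomputable def bridgeBeta (G : SimpleGraph V) (h : V → ℤ) : ℝ :=
  Filter.limsup (fun n : ℕ => (bridgeInf G h n : ℝ) ^ (1 / (n : ℝ))) atTop

noncomputable def rbridgeBeta (G : SimpleGraph V) (h : V → ℤ) : ℝ :=
  Filter.limsup (fun n : ℕ => (rbridgeInf G h n : ℝ) ^ (1 / (n : ℝ))) atTop

noncomputable def betaMax (G : SimpleGraph V) (h : V → ℤ) : ℝ :=
  max (bridgeBeta G h) (rbridgeBeta G h)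

/-!
Cut a half-space walk after its last visit to its maximal height. The first piece is a bridge whose
span is that maximal height, and the rest is a half-space walk for `-h` of strictly smaller span.
Iterating splits the walk into alternating bridges and reversed bridges with spans
`a₁ > a₂ > ⋯ > 0`, and `∑ aᵢ ≤ d n`. Translating the pieces by elements of `Γ` glues the odd ones
into a single bridge and the even ones into a single reversed bridge, of total length `n`. The walk
is recovered from this pair and the spans, since the span of each piece tells where it ends inside
the glued bridge. Finally the spans form a partition into distinct parts of some `s ≤ d n`, and
`P_D` is monotone.
-/

lemma Multiset.sup_mem_of_ne_zero {P : Multiset ℕ} (hP : P ≠ 0) : P.sup ∈ P := by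
  obtain ⟨M, hM, hmax⟩ := P.exists_max_image id hP
  rwa [le_antisymm (Multiset.sup_le.2 hmax) (Multiset.le_sup hM)]

lemma Multiset.sup_cons_erase_sup (P : Multiset ℕ) (k : ℕ) :
    ((P.sup + k) ::ₘ P.erase P.sup).sup = P.sup + k := by
  rw [Multiset.sup_cons, sup_eq_left]
  exact (Multiset.sup_mono (Multiset.erase_subset _ _)).trans (Nat.le_add_right _ _)

lemma Multiset.sum_cons_erase_sup (P : Multiset ℕ) (k : ℕ) :
    ((P.sup + k) ::ₘ P.erase P.sup).sum = P.sum + k := by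
  rcases eq_or_ne P 0 with rfl | hP
  · simp
  · rw [Multiset.sum_cons, ← Multiset.sum_erase (Multiset.sup_mem_of_ne_zero hP)]
    ring

namespace Nat.Partition

def enlargeLargest {s N : ℕ} (h : s ≤ N) (p : Partition s) : Partition N :=
  ofSums N ((p.parts.sup + (N - s)) ::ₘ p.parts.erase p.parts.sup) <| by
    rw [Multiset.sum_cons_erase_sup, p.parts_sum]
    omega

lemma sup_mem_parts {s : ℕ} (p : Partition s) (hs : s ≠ 0) : p.parts.sup ∈ p.parts :=
  Multiset.sup_mem_of_ne_zero fun h0 => hs (by simpa [h0] using p.parts_sum.symm)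

lemma enlargeLargest_parts {s N : ℕ} (h : s ≤ N) {p : Partition s} (hs : s ≠ 0) :
    (enlargeLargest h p).parts = (p.parts.sup + (N - s)) ::ₘ p.parts.erase p.parts.sup := by
  refine Multiset.filter_eq_self.2 fun x hx => ?_
  rcases Multiset.mem_cons.1 hx with rfl | hx
  · have := p.parts_pos (p.sup_mem_parts hs)
    omega
  · exact (p.parts_pos (Multiset.mem_of_mem_erase hx)).ne'

theorem card_distincts_mono : Monotone fun n => #(distincts n) := by
  intro s N hsN
  refine card_le_card_of_injOn (enlargeLargest hsN) (fun p hp => ?_) (fun p₁ _ p₂ _ h => ?_)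
  · simp only [distincts, coe_filter, mem_univ, true_and] at hp ⊢
    refine (Multiset.nodup_cons.2 ⟨fun hmem => ?_, hp.erase _⟩).filter _
    obtain ⟨hne, hmem⟩ := hp.mem_erase_iff.1 hmem
    have := Multiset.le_sup hmem
    omega
  · rcases eq_or_ne s 0 with rfl | hs
    · exact Subsingleton.elim _ _
    have h' := congrArg parts h
    rw [enlargeLargest_parts hsN hs, enlargeLargest_parts hsN hs] at h'
    have hsup : p₁.parts.sup = p₂.parts.sup := by
      have := congrArg Multiset.sup h'
      rw [Multiset.sup_cons_erase_sup, Multiset.sup_cons_erase_sup] at this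
      omega
    rw [hsup, Multiset.cons_inj_right] at h'
    ext1
    rw [← Multiset.cons_erase (p₁.sup_mem_parts hs), ← Multiset.cons_erase (p₂.sup_mem_parts hs),
      hsup, h']

end Nat.Partition

lemma Nat.card_sigma_le_mul {α : Type*} [Finite α] {β : α → Type*} [∀ a, Finite (β a)] {K : ℕ}
    (h : ∀ a, Nat.card (β a) ≤ K) : Nat.card (Σ a, β a) ≤ K * Nat.card α := by
  have := Fintype.ofFinite α
  rw [Nat.card_sigma, Nat.card_eq_fintype_card, mul_comm, ← smul_eq_mul]
  exact Finset.sum_le_card_nsmul _ _ _ fun a _ => h a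

variable {G : SimpleGraph V}

def walkPrefix (c : ℕ) (w : ℕ → V) : ℕ → V := fun i => w (min i c)

def walkSuffix (c : ℕ) (w : ℕ → V) : ℕ → V := fun i => w (c + i)

def walkAppend (c : ℕ) (w₁ w₂ : ℕ → V) : ℕ → V := fun i => if i ≤ c then w₁ i else w₂ (i - c)

section WalkOperations

variable {c i n : ℕ} {v : V} {w w₁ w₂ : ℕ → V}

@[simp] lemma walkPrefix_of_le (h : i ≤ c) : walkPrefix c w i = w i := by
  simp [walkPrefix, h]

lemma walkAppend_of_le (h : i ≤ c) : walkAppend c w₁ w₂ i = w₁ i := if_pos h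

lemma walkAppend_add (h : w₂ 0 = w₁ c) (i : ℕ) : walkAppend c w₁ w₂ (c + i) = w₂ i := by
  rcases i with _ | i
  · simp [walkAppend, h]
  · simp [walkAppend]

lemma walkSuffix_walkAppend (h : w₂ 0 = w₁ c) : walkSuffix c (walkAppend c w₁ w₂) = w₂ :=
  funext (walkAppend_add h)

lemma eq_of_walkSuffix_eq (h : ∀ i ≤ c, w₁ i = w₂ i) (hs : walkSuffix c w₁ = walkSuffix c w₂) :
    w₁ = w₂ := by
  funext i
  rcases le_or_gt i c with hi | hi
  · exact h i hi
  · obtain ⟨j, rfl⟩ := Nat.exists_eq_add_of_le hi.le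
    exact congrFun hs j

lemma IsWalkFrom.eq_const (hw : IsWalkFrom G 0 v w) : w = fun _ => v :=
  funext fun i => (hw.2.2 i i.zero_le).trans hw.1

lemma IsWalkFrom.prefix (hw : IsWalkFrom G n v w) (hc : c ≤ n) :
    IsWalkFrom G c v (walkPrefix c w) := by
  refine ⟨by simpa using hw.1, fun i hi => ?_, fun i hi => ?_⟩
  · rw [walkPrefix_of_le hi.le, walkPrefix_of_le hi]
    exact hw.2.1 i (by omega)
  · simp [walkPrefix, hi]

lemma IsWalkFrom.suffix (hw : IsWalkFrom G n v w) (hc : c ≤ n) :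
    IsWalkFrom G (n - c) (w c) (walkSuffix c w) := by
  refine ⟨rfl, fun i hi => hw.2.1 (c + i) (by omega), fun i hi => ?_⟩
  simp only [walkSuffix]
  rw [hw.2.2 (c + i) (by omega), hw.2.2 (c + (n - c)) (by omega)]

lemma IsWalkFrom.append {m k : ℕ} (h₁ : IsWalkFrom G m v w₁) (h₂ : IsWalkFrom G k (w₁ m) w₂) :
    IsWalkFrom G (m + k) v (walkAppend m w₁ w₂) := by
  have hU : ∀ i, walkAppend m w₁ w₂ (m + i) = w₂ i := walkAppend_add h₂.1
  refine ⟨by rw [walkAppend_of_le m.zero_le, h₁.1], fun i hi => ?_, fun i hi => ?_⟩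
  · rcases lt_or_ge i m with him | him
    · rw [walkAppend_of_le him.le, walkAppend_of_le him]
      exact h₁.2.1 i him
    · obtain ⟨j, rfl⟩ := Nat.exists_eq_add_of_le him
      rw [hU, add_assoc, hU]
      exact h₂.2.1 j (by omega)
  · obtain ⟨j, rfl⟩ := Nat.exists_eq_add_of_le (show m ≤ i by omega)
    rw [hU, hU]
    exact h₂.2.2 j (by omega)

lemma IsSAWFrom.prefix (hw : IsSAWFrom G n v w) (hc : c ≤ n) :
    IsSAWFrom G c v (walkPrefix c w) := by
  refine ⟨hw.1.prefix hc, fun i hi j hj hij => ?_⟩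
  simp only [Set.mem_Iic] at hi hj
  rw [walkPrefix_of_le hi, walkPrefix_of_le hj] at hij
  exact hw.2 (Set.mem_Iic.2 (by omega)) (Set.mem_Iic.2 (by omega)) hij

lemma IsSAWFrom.suffix (hw : IsSAWFrom G n v w) (hc : c ≤ n) :
    IsSAWFrom G (n - c) (w c) (walkSuffix c w) := by
  refine ⟨hw.1.suffix hc, fun i hi j hj hij => ?_⟩
  simp only [Set.mem_Iic] at hi hj
  have := hw.2 (Set.mem_Iic.2 (by omega : c + i ≤ n)) (Set.mem_Iic.2 (by omega : c + j ≤ n)) hij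
  omega

lemma isSAWFrom_const (v : V) : IsSAWFrom G 0 v (fun _ => v) :=
  ⟨⟨rfl, by simp, fun _ _ => rfl⟩, fun i hi j hj _ => by simp_all⟩

end WalkOperations

section Bridges

variable {g : V → ℤ} {i k m n : ℕ} {v : V} {w w₁ w₂ : ℕ → V}

lemma isBridgeFrom_neg_iff : IsBridgeFrom G (-g) n v w ↔ IsRBridgeFrom G g n v w := by
  simp only [IsBridgeFrom, IsRBridgeFrom, Pi.neg_apply, neg_lt_neg_iff, neg_le_neg_iff]

lemma isBridgeFrom_const (g : V → ℤ) (v : V) : IsBridgeFrom G g 0 v (fun _ => v) :=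
  ⟨isSAWFrom_const v, by omega⟩

lemma IsBridgeFrom.start_le (hw : IsBridgeFrom G g n v w) (hi : i ≤ n) : g v ≤ g (w i) := by
  rcases i.eq_zero_or_pos with rfl | h
  · rw [hw.1.1.1]
  · exact hw.1.1.1 ▸ (hw.2 i h hi).1.le

lemma IsBridgeFrom.le_last (hw : IsBridgeFrom G g n v w) (hi : i ≤ n) : g (w i) ≤ g (w n) := by
  rcases i.eq_zero_or_pos with rfl | h
  · exact hw.1.1.1 ▸ hw.start_le le_rfl
  · exact (hw.2 i h hi).2

lemma IsBridgeFrom.map (γ : G ≃g G) (hγ : ∀ x y, g (γ x) - g (γ y) = g x - g y)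
    (hw : IsBridgeFrom G g n v w) : IsBridgeFrom G g n (γ v) (fun i => γ (w i)) := by
  obtain ⟨⟨⟨h0, hadj, hend⟩, hinj⟩, hh⟩ := hw
  refine ⟨⟨⟨congrArg γ h0, fun i hi => γ.map_adj_iff.2 (hadj i hi),
    fun i hi => congrArg γ (hend i hi)⟩, fun i hi j hj hij => hinj hi hj (γ.injective hij)⟩,
    fun i h1 hi => ?_⟩
  show g (γ (w 0)) < g (γ (w i)) ∧ g (γ (w i)) ≤ g (γ (w n))
  have := hh i h1 hi
  have := hγ (w i) (w 0)
  have := hγ (w n) (w i)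
  omega

/-- This is what makes the cut point of a concatenation of bridges recoverable. -/
lemma IsBridgeFrom.walkAppend_le_iff (h₁ : IsBridgeFrom G g m v w₁)
    (h₂ : IsBridgeFrom G g k (w₁ m) w₂) (hi : i ≤ m + k) :
    g (walkAppend m w₁ w₂ i) ≤ g (w₁ m) ↔ i ≤ m := by
  rcases le_or_gt i m with him | him
  · simpa [walkAppend_of_le him, him] using h₁.le_last him
  · obtain ⟨j, rfl⟩ := Nat.exists_eq_add_of_le him.le
    rw [walkAppend_add h₂.1.1.1]
    have := (h₂.2 j (by omega) (by omega)).1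
    rw [h₂.1.1.1] at this
    omega

lemma IsBridgeFrom.append (h₁ : IsBridgeFrom G g m v w₁) (h₂ : IsBridgeFrom G g k (w₁ m) w₂) :
    IsBridgeFrom G g (m + k) v (walkAppend m w₁ w₂) := by
  have hcut := fun {i} (hi : i ≤ m + k) => h₁.walkAppend_le_iff h₂ hi
  have hend : walkAppend m w₁ w₂ (m + k) = w₂ k := walkAppend_add h₂.1.1.1 k
  refine ⟨⟨h₁.1.1.append h₂.1.1, fun i hi j hj hij => ?_⟩, fun i h1 hi => ?_⟩
  · simp only [Set.mem_Iic] at hi hj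
    have hij' : i ≤ m ↔ j ≤ m := by rw [← hcut hi, ← hcut hj, hij]
    rcases le_or_gt i m with him | him
    · have hjm := hij'.1 him
      rw [walkAppend_of_le him, walkAppend_of_le hjm] at hij
      exact h₁.1.2 (Set.mem_Iic.2 him) (Set.mem_Iic.2 hjm) hij
    · have hjm : m < j := lt_of_not_ge (mt hij'.2 him.not_ge)
      obtain ⟨i', rfl⟩ := Nat.exists_eq_add_of_le him.le
      obtain ⟨j', rfl⟩ := Nat.exists_eq_add_of_le hjm.le
      rw [walkAppend_add h₂.1.1.1, walkAppend_add h₂.1.1.1] at hij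
      have := h₂.1.2 (Set.mem_Iic.2 (by omega : i' ≤ k)) (Set.mem_Iic.2 (by omega : j' ≤ k)) hij
      omega
  · rw [walkAppend_of_le m.zero_le, h₁.1.1.1, hend]
    have hk : g (w₁ m) ≤ g (w₂ k) := h₂.1.1.1 ▸ h₂.start_le le_rfl
    rcases le_or_gt i m with him | him
    · rw [walkAppend_of_le him]
      exact ⟨h₁.1.1.1 ▸ (h₁.2 i h1 him).1, (h₁.le_last him).trans hk⟩
    · obtain ⟨j, rfl⟩ := Nat.exists_eq_add_of_le him.le
      rw [walkAppend_add h₂.1.1.1]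
      have := (hcut hi).not.2 (by omega)
      rw [walkAppend_add h₂.1.1.1] at this
      exact ⟨by have := h₁.start_le (le_refl m); omega, h₂.le_last (by omega)⟩

end Bridges

def peakIndex (g : V → ℤ) (n : ℕ) (w : ℕ → V) : ℕ :=
  Nat.findGreatest (fun i => ∀ j ≤ n, g (w j) ≤ g (w i)) n

section Peak

variable {g : V → ℤ} {j n : ℕ} {v : V} {w : ℕ → V}

lemma peakIndex_le : peakIndex g n w ≤ n := Nat.findGreatest_le n

lemma height_le_peak (hj : j ≤ n) : g (w j) ≤ g (w (peakIndex g n w)) := by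
  obtain ⟨b, hb, hmax⟩ := (Finset.range (n + 1)).exists_max_image (fun i => g (w i)) ⟨0, by simp⟩
  have hP : ∀ j ≤ n, g (w j) ≤ g (w b) := fun j hj => hmax j (by simp; omega)
  exact Nat.findGreatest_spec (P := fun i => ∀ j ≤ n, g (w j) ≤ g (w i))
    (Finset.mem_range_succ_iff.1 hb) hP j hj

lemma height_lt_peak (hj : j ≤ n) (h : peakIndex g n w < j) :
    g (w j) < g (w (peakIndex g n w)) := by
  have := Nat.findGreatest_is_greatest (P := fun i => ∀ j ≤ n, g (w j) ≤ g (w i)) h hj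
  obtain ⟨k, hk, hlt⟩ : ∃ k ≤ n, g (w j) < g (w k) := by simpa using this
  exact hlt.trans_le (height_le_peak hk)

lemma IsHSWFrom.one_le_peakIndex (hw : IsHSWFrom G g n v w) (hn : 1 ≤ n) :
    1 ≤ peakIndex g n w := by
  by_contra h0
  have := height_le_peak (g := g) (w := w) hn
  rw [show peakIndex g n w = 0 by omega] at this
  have := hw.2 1 le_rfl hn
  omega

lemma IsHSWFrom.isBridgeFrom_prefix (hw : IsHSWFrom G g n v w) :
    IsBridgeFrom G g (peakIndex g n w) v (walkPrefix (peakIndex g n w) w) := by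
  refine ⟨hw.1.prefix peakIndex_le, fun i h1 hi => ?_⟩
  simp only [walkPrefix_of_le hi, walkPrefix_of_le le_rfl, walkPrefix_of_le (Nat.zero_le _)]
  exact ⟨hw.2 i h1 (hi.trans peakIndex_le), height_le_peak (hi.trans peakIndex_le)⟩

lemma IsHSWFrom.suffix_neg (hw : IsHSWFrom G g n v w) :
    IsHSWFrom G (-g) (n - peakIndex g n w) (w (peakIndex g n w))
      (walkSuffix (peakIndex g n w) w) := by
  refine ⟨hw.1.suffix peakIndex_le, fun i h1 hi => ?_⟩
  have := height_lt_peak (g := g) (w := w) (n := n) (j := peakIndex g n w + i) (by omega) (by omega)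
  simp only [walkSuffix, Pi.neg_apply, add_zero]
  omega

end Peak

/-- The spans of the pieces of a walk, and the bridge `up` of length `len` and the reversed bridge
`down` (a bridge for `-g`) of the complementary length into which the pieces are glued. -/
@[ext]
structure BridgeCode (α : Type*) where
  spans : List ℕ
  len : ℕ
  up : ℕ → α
  down : ℕ → α

namespace BridgeCode

/-- Prepend the bridge `w[0, c]` to the code `t` of the rest `w[c, n]` of the walk; the roles of
`up` and `down` swap, since `t` codes with respect to `-g`. -/
def glue (T : V → V → G ≃g G) (g : V → ℤ) (n c : ℕ) (w : ℕ → V) (t : BridgeCode V) :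
    BridgeCode V where
  spans := (g (w c) - g (w 0)).toNat :: t.spans
  len := n - t.len
  up := walkAppend c (walkPrefix c w) t.down
  down := fun i => T (w c) (w 0) (t.up i)

structure IsValid (G : SimpleGraph V) (g : V → ℤ) (n : ℕ) (v : V) (w : ℕ → V)
    (e : BridgeCode V) : Prop where
  len_le : e.len ≤ n
  isBridgeFrom_up : IsBridgeFrom G g e.len v e.up
  isBridgeFrom_down : IsBridgeFrom G (-g) (n - e.len) v e.down
  pairwise_spans : e.spans.Pairwise (· > ·)
  spans_pos : ∀ a ∈ e.spans, 0 < a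
  -- keeps the spans of the rest below the span of the first piece when gluing
  spans_le : ∀ a ∈ e.spans, ∃ i ≤ n, (a : ℤ) ≤ g (w i) - g v
  sum_spans : (e.spans.sum : ℤ) = g (e.up e.len) - g (e.down (n - e.len))

variable {T : V → V → G ≃g G} {g : V → ℤ} {n : ℕ} {v : V} {w : ℕ → V}

lemma isValid_const (g : V → ℤ) (v : V) :
    IsValid G g 0 v (fun _ => v) ⟨[], 0, fun _ => v, fun _ => v⟩ :=
  ⟨le_rfl, isBridgeFrom_const g v, isBridgeFrom_const (-g) v, List.Pairwise.nil, by simp,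
    by simp, by simp⟩

lemma IsValid.glue (hT : ∀ u z, T u z u = z)
    (hTg : ∀ u z x y, g (T u z x) - g (T u z y) = g x - g y)
    (hw : IsHSWFrom G g n v w) {c : ℕ} (hc : 1 ≤ c) (hcn : c ≤ n)
    (hhead : IsBridgeFrom G g c v (walkPrefix c w)) {t : BridgeCode V}
    (ht : t.IsValid G (-g) (n - c) (w c) (walkSuffix c w)) :
    (glue T g n c w t).IsValid G g n v w := by
  obtain rfl : w 0 = v := hw.1.1.1
  have hlen := ht.len_le
  have ha : g (w 0) < g (w c) := hw.2 c hc hcn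
  have hdown : IsBridgeFrom G g (n - c - t.len) (walkPrefix c w c) t.down := by
    simpa using ht.isBridgeFrom_down
  have hdown_end : walkAppend c (walkPrefix c w) t.down (n - t.len) = t.down (n - c - t.len) := by
    rw [show n - t.len = c + (n - c - t.len) by omega, walkAppend_add hdown.1.1.1]
  have htail : ∀ b ∈ t.spans, (b : ℤ) < g (w c) - g (w 0) := by
    intro b hb
    obtain ⟨i, hi, hbi⟩ := ht.spans_le b hb
    have := hw.2 (c + i) (by omega) (by omega)
    simp only [walkSuffix, Pi.neg_apply] at hbi
    omega
  refine ⟨by simp [BridgeCode.glue], ?_, ?_, ?_, ?_, ?_, ?_⟩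
  · simpa [BridgeCode.glue, show c + (n - c - t.len) = n - t.len by omega]
      using hhead.append hdown
  · have := ht.isBridgeFrom_up.map (T (w c) (w 0))
      (fun x y => by simp only [Pi.neg_apply]; linarith [hTg (w c) (w 0) x y])
    simpa [BridgeCode.glue, hT, show n - (n - t.len) = t.len by omega] using this
  · exact List.pairwise_cons.2 ⟨fun b hb => by have := htail b hb; omega, ht.pairwise_spans⟩
  · simp only [BridgeCode.glue, List.mem_cons, forall_eq_or_imp]
    exact ⟨by omega, ht.spans_pos⟩
  · simp only [BridgeCode.glue, List.mem_cons, forall_eq_or_imp]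
    exact ⟨⟨c, hcn, by omega⟩, fun b hb => ⟨c, hcn, by have := htail b hb; omega⟩⟩
  · have hsum := ht.sum_spans
    have hTend := hTg (w c) (w 0) (t.up t.len) (w c)
    simp only [BridgeCode.glue, List.sum_cons, Nat.cast_add, hdown_end, hT,
      show n - (n - t.len) = t.len by omega, Pi.neg_apply] at hsum hTend ⊢
    omega

lemma eq_of_glue_eq {w₁ w₂ : ℕ → V} {c₁ c₂ : ℕ} {t₁ t₂ : BridgeCode V}
    (hc₁ : c₁ ≤ n) (hc₂ : c₂ ≤ n)
    (hhead₁ : IsBridgeFrom G g c₁ v (walkPrefix c₁ w₁))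
    (hhead₂ : IsBridgeFrom G g c₂ v (walkPrefix c₂ w₂))
    (ht₁ : t₁.IsValid G (-g) (n - c₁) (w₁ c₁) (walkSuffix c₁ w₁))
    (ht₂ : t₂.IsValid G (-g) (n - c₂) (w₂ c₂) (walkSuffix c₂ w₂))
    (h : glue T g n c₁ w₁ t₁ = glue T g n c₂ w₂ t₂) :
    c₁ = c₂ ∧ (∀ i ≤ c₁, w₁ i = w₂ i) ∧ t₁ = t₂ := by
  simp only [glue, BridgeCode.mk.injEq, List.cons.injEq] at h
  obtain ⟨⟨hspan, hspans⟩, hlen, hup, hdown⟩ := h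
  have hv₁ : w₁ 0 = v := by simpa using hhead₁.1.1.1
  have hv₂ : w₂ 0 = v := by simpa using hhead₂.1.1.1
  have hlen₁ := ht₁.len_le
  have hlen₂ := ht₂.len_le
  have hpeak : g (walkPrefix c₁ w₁ c₁) = g (walkPrefix c₂ w₂ c₂) := by
    have hs₁ := hhead₁.start_le le_rfl
    have hs₂ := hhead₂.start_le le_rfl
    simp only [walkPrefix_of_le le_rfl, hv₁, hv₂] at hspan hs₁ hs₂ ⊢
    omega
  have hd₁ : IsBridgeFrom G g (n - c₁ - t₁.len) (walkPrefix c₁ w₁ c₁) t₁.down := by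
    simpa using ht₁.isBridgeFrom_down
  have hd₂ : IsBridgeFrom G g (n - c₂ - t₂.len) (walkPrefix c₂ w₂ c₂) t₂.down := by
    simpa using ht₂.isBridgeFrom_down
  have hcut : ∀ i ≤ n - t₁.len, (i ≤ c₁ ↔ i ≤ c₂) := fun i hi => by
    rw [← hhead₁.walkAppend_le_iff hd₁ (by omega), ← hhead₂.walkAppend_le_iff hd₂ (by omega),
      hup, hpeak]
  obtain rfl : c₁ = c₂ :=
    le_antisymm ((hcut c₁ (by omega)).1 le_rfl) ((hcut c₂ (by omega)).2 le_rfl)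
  have hprefix : ∀ i ≤ c₁, w₁ i = w₂ i := fun i hi => by
    simpa [walkAppend_of_le hi, walkPrefix_of_le hi] using congrFun hup i
  refine ⟨rfl, hprefix, BridgeCode.ext hspans (by omega) ?_ ?_⟩
  · funext i
    have := congrFun hdown i
    rw [hprefix c₁ le_rfl, hv₁, hv₂] at this
    exact (T _ _).injective this
  · rw [← walkSuffix_walkAppend hd₁.1.1.1, hup, walkSuffix_walkAppend hd₂.1.1.1]

end BridgeCode

/-- Cut a half-space walk after its last visit to the maximal height, encode the rest recursively
with respect to `-g`, and glue. The `max 1` only serves termination: on half-space walks of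
positive length the peak index is already positive. -/
def bridgeCode (T : V → V → G ≃g G) : (V → ℤ) → ℕ → (ℕ → V) → BridgeCode V
  | _, 0, w => ⟨[], 0, fun _ => w 0, fun _ => w 0⟩
  | g, n + 1, w =>
    let c := max 1 (peakIndex g (n + 1) w)
    BridgeCode.glue T g (n + 1) c w (bridgeCode T (-g) (n + 1 - c) (walkSuffix c w))
termination_by _ n => n
decreasing_by omega

section BridgeCodeProperties

variable {T : V → V → G ≃g G} {g : V → ℤ} {n : ℕ} {v : V} {w : ℕ → V}

lemma bridgeCode_zero : bridgeCode T g 0 w = ⟨[], 0, fun _ => w 0, fun _ => w 0⟩ := by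
  rw [bridgeCode]

lemma bridgeCode_succ (hw : IsHSWFrom G g (n + 1) v w) :
    bridgeCode T g (n + 1) w =
      BridgeCode.glue T g (n + 1) (peakIndex g (n + 1) w) w
        (bridgeCode T (-g) (n + 1 - peakIndex g (n + 1) w)
          (walkSuffix (peakIndex g (n + 1) w) w)) := by
  rw [bridgeCode, max_eq_right (hw.one_le_peakIndex (by omega))]

theorem isValid_bridgeCode (hT : ∀ u z, T u z u = z)
    (hTg : ∀ u z x y, g (T u z x) - g (T u z y) = g x - g y) (hw : IsHSWFrom G g n v w) :
    (bridgeCode T g n w).IsValid G g n v w := by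
  induction n using Nat.strong_induction_on generalizing g v w with
  | _ n ih =>
    rcases n with _ | n
    · obtain rfl : w = fun _ => v := hw.1.1.eq_const
      rw [bridgeCode_zero]
      exact BridgeCode.isValid_const g v
    · have hc := hw.one_le_peakIndex (by omega)
      rw [bridgeCode_succ hw]
      exact .glue hT hTg hw hc peakIndex_le hw.isBridgeFrom_prefix
        (ih _ (by omega) (fun u z x y => by simp only [Pi.neg_apply]; linarith [hTg u z x y])
          hw.suffix_neg)

theorem bridgeCode_injOn (hT : ∀ u z, T u z u = z)
    (hTg : ∀ u z x y, g (T u z x) - g (T u z y) = g x - g y) :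
    Set.InjOn (bridgeCode T g n) {w | IsHSWFrom G g n v w} := by
  induction n using Nat.strong_induction_on generalizing g v with
  | _ n ih =>
    intro w₁ hw₁ w₂ hw₂ h
    rcases n with _ | n
    · rw [hw₁.1.1.eq_const, hw₂.1.1.eq_const]
    · have hneg : ∀ u z x y, (-g) (T u z x) - (-g) (T u z y) = (-g) x - (-g) y :=
        fun u z x y => by simp only [Pi.neg_apply]; linarith [hTg u z x y]
      rw [bridgeCode_succ hw₁, bridgeCode_succ hw₂] at h
      obtain ⟨hc, hprefix, htail⟩ := BridgeCode.eq_of_glue_eq peakIndex_le peakIndex_le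
        hw₁.isBridgeFrom_prefix hw₂.isBridgeFrom_prefix
        (isValid_bridgeCode hT hneg hw₁.suffix_neg) (isValid_bridgeCode hT hneg hw₂.suffix_neg) h
      have hsuffix₂ := hw₂.suffix_neg
      rw [← hc] at htail hsuffix₂
      rw [← hprefix _ le_rfl] at hsuffix₂
      have := hw₁.one_le_peakIndex (by omega)
      exact eq_of_walkSuffix_eq hprefix (ih _ (by omega) hneg hw₁.suffix_neg hsuffix₂ htail)

end BridgeCodeProperties

section Counting

variable {g : V → ℤ} {n : ℕ} {v : V}

lemma finite_setOf_isWalkFrom (hlf : ∀ v : V, (G.neighborSet v).Finite) (n : ℕ) (v : V) :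
    {w | IsWalkFrom G n v w}.Finite := by
  induction n with
  | zero => exact (Set.finite_singleton fun _ => v).subset fun w hw => hw.eq_const
  | succ n ih =>
    refine (ih.biUnion fun w' _ => (hlf (w' n)).image fun x => walkAppend n w' fun _ => x).subset
      fun w hw => Set.mem_biUnion (hw.prefix n.le_succ) ⟨w (n + 1), ?_, funext fun i => ?_⟩
    · simpa using hw.2.1 n (by omega)
    · rcases le_or_gt i n with hi | hi
      · simp [walkAppend_of_le hi, hi]
      · simp [walkAppend, hw.2.2 i hi, hi.not_ge]

lemma finite_of_isWalkFrom (hlf : ∀ v : V, (G.neighborSet v).Finite) {P : (ℕ → V) → Prop}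
    (hP : ∀ w, P w → IsWalkFrom G n v w) : Finite {w // P w} :=
  ((finite_setOf_isWalkFrom hlf n v).subset hP).to_subtype

lemma IsWalkFrom.abs_sub_le {d : ℤ} {w : ℕ → V} (hd : ∀ x y, G.Adj x y → g x - g y ≤ d)
    (hw : IsWalkFrom G n v w) {i : ℕ} (hi : i ≤ n) : |g (w i) - g v| ≤ d * i := by
  induction i with
  | zero => simp [hw.1]
  | succ i ih =>
    have hadj := hw.2.1 i hi
    have := hd _ _ hadj
    have := hd _ _ hadj.symm
    have := abs_le.1 (ih (by omega))
    rw [abs_le]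
    push_cast
    constructor <;> linarith

abbrev BridgePair (G : SimpleGraph V) (g : V → ℤ) (n : ℕ) (v : V) : Type _ :=
  Σ m : Fin (n + 1), {B // IsBridgeFrom G g m v B} × {R // IsRBridgeFrom G g (n - m) v R}

def BridgePair.span (p : BridgePair G g n v) : ℕ :=
  (g (p.2.1.1 p.1) - g (p.2.2.1 (n - p.1))).toNat

lemma BridgePair.span_le {d : ℕ} (hd : ∀ x y, G.Adj x y → g x - g y ≤ d)
    (p : BridgePair G g n v) : p.span ≤ d * n := by
  obtain ⟨m, ⟨B, hB⟩, ⟨R, hR⟩⟩ := p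
  have h₁ := abs_le.1 (hB.1.1.abs_sub_le hd (le_refl (m : ℕ)))
  have h₂ := abs_le.1 (hR.1.1.abs_sub_le hd (le_refl (n - m)))
  have hm : (m : ℕ) ≤ n := Nat.lt_succ_iff.1 m.2
  have : ((d * n : ℕ) : ℤ) = d * (m : ℕ) + d * ((n - m : ℕ) : ℤ) := by push_cast [hm]; ring
  simp only [BridgePair.span]
  omega

lemma finite_bridgePair (hlf : ∀ v : V, (G.neighborSet v).Finite) :
    Finite (BridgePair G g n v) :=
  have := fun m => finite_of_isWalkFrom hlf (P := IsBridgeFrom G g m v) fun _ hw => hw.1.1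
  have := fun m => finite_of_isWalkFrom hlf (P := IsRBridgeFrom G g m v) fun _ hw => hw.1.1
  inferInstance

lemma card_bridgePair (hlf : ∀ v : V, (G.neighborSet v).Finite) :
    Nat.card (BridgePair G g n v) =
      ∑ m ∈ range (n + 1), bridgeCount G g m v * rbridgeCount G g (n - m) v := by
  have := fun m => finite_of_isWalkFrom hlf (P := IsBridgeFrom G g m v) fun _ hw => hw.1.1
  have := fun m => finite_of_isWalkFrom hlf (P := IsRBridgeFrom G g m v) fun _ hw => hw.1.1
  rw [Nat.card_sigma, ← Fin.sum_univ_eq_sum_range]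
  simp only [Nat.card_prod]
  rfl

namespace BridgeCode.IsValid

variable {w : ℕ → V} {e : BridgeCode V}

def bridgePair (hv : e.IsValid G g n v w) : BridgePair G g n v :=
  ⟨⟨e.len, Nat.lt_succ_of_le hv.len_le⟩, ⟨e.up, hv.isBridgeFrom_up⟩,
    ⟨e.down, isBridgeFrom_neg_iff.1 hv.isBridgeFrom_down⟩⟩

def partition (hv : e.IsValid G g n v w) : Nat.Partition.distincts hv.bridgePair.span :=
  ⟨⟨e.spans, fun hi => hv.spans_pos _ hi, by
      simp only [Multiset.sum_coe, bridgePair, BridgePair.span]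
      have := hv.sum_spans
      omega⟩,
    Finset.mem_filter.2 ⟨Finset.mem_univ _, Multiset.coe_nodup.2 (hv.pairwise_spans.imp ne_of_gt)⟩⟩

end BridgeCode.IsValid

end Counting

theorem hswCount_le_card_sigma (hlf : ∀ v : V, (G.neighborSet v).Finite) {g : V → ℤ} {n : ℕ}
    {v : V} {T : V → V → G ≃g G} (hT : ∀ u z, T u z u = z)
    (hTg : ∀ u z x y, g (T u z x) - g (T u z y) = g x - g y) :
    hswCount G g n v ≤ Nat.card (Σ p : BridgePair G g n v, Nat.Partition.distincts p.span) := by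
  have := finite_bridgePair hlf (g := g) (n := n) (v := v)
  let hv (w : {w // IsHSWFrom G g n v w}) := isValid_bridgeCode hT hTg w.2
  refine Nat.card_le_card_of_injective (fun w => ⟨(hv w).bridgePair, (hv w).partition⟩)
    fun w₁ w₂ h => Subtype.ext ?_
  have := congrArg (fun x => (x.2.1.parts, (x.1.1 : ℕ), x.1.2.1.1, x.1.2.2.1)) h
  simp only [BridgeCode.IsValid.bridgePair, BridgeCode.IsValid.partition, Prod.mk.injEq,
    Multiset.coe_eq_coe] at this
  obtain ⟨hspans, hlen, hup, hdown⟩ := this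
  refine bridgeCode_injOn hT hTg w₁.2 w₂.2 (BridgeCode.ext ?_ hlen hup hdown)
  exact hspans.eq_of_pairwise (fun a b _ _ hab hba => by omega) (hv w₁).pairwise_spans
    (hv w₂).pairwise_spans

theorem statement_5_general {V : Type*} (G : SimpleGraph V)
    (hlf : ∀ v : V, (G.neighborSet v).Finite)
    (h : V → ℤ) (Γ : Subgroup (G ≃g G)) (hghf : IsGraphHeightFunction G h Γ)
    (htrans : ∀ u v : V, ∃ γ ∈ Γ, γ u = v)
    (d : ℕ) (hd : IsLeast {z : ℤ | ∀ u v : V, G.Adj u v → h u - h v ≤ z} (d : ℤ))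
    (n : ℕ) (v : V) :
    hswCount G h n v ≤
      distinctPartitionCount (d * n) *
        ∑ m ∈ Finset.range (n + 1), bridgeCount G h m v * rbridgeCount G h (n - m) v := by
  choose T hTΓ hT using htrans
  have hTh : ∀ u z x y, h (T u z x) - h (T u z y) = h x - h y :=
    fun u z x y => hghf.2.1 _ (hTΓ u z) y x
  have := finite_bridgePair hlf (g := h) (n := n) (v := v)
  calc hswCount G h n v
      ≤ Nat.card (Σ p : BridgePair G h n v, Nat.Partition.distincts p.span) :=
        hswCount_le_card_sigma hlf hT hTh
    _ ≤ distinctPartitionCount (d * n) * Nat.card (BridgePair G h n v) :=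
        Nat.card_sigma_le_mul fun p => by
          simpa [distinctPartitionCount] using Nat.Partition.card_distincts_mono (p.span_le hd.1)
    _ = _ := by rw [card_bridgePair hlf]

/-- In the transitive case, `h_n ≤ P_D(d·n) · Σ_{m=0}^{n} b_m · b̄_{n−m}`. -/
theorem statement_5 {V : Type*} (G : SimpleGraph V)
    (hinf : Infinite V) (hlf : ∀ v : V, (G.neighborSet v).Finite) (hconn : G.Connected)
    (h : V → ℤ) (Γ : Subgroup (G ≃g G)) (hghf : IsGraphHeightFunction G h Γ)
    (htrans : ∀ u v : V, ∃ γ ∈ Γ, γ u = v)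
    (d : ℕ) (hd : IsLeast {z : ℤ | ∀ u v : V, G.Adj u v → h u - h v ≤ z} (d : ℤ))
    (n : ℕ) (v : V) :
    hswCount G h n v ≤
      distinctPartitionCount (d * n) *
        ∑ m ∈ Finset.range (n + 1), bridgeCount G h m v * rbridgeCount G h (n - m) v :=
  statement_5_general G hlf h Γ hghf htrans d hd n v
end
end

section
/- The Grandparent graph GP admits no unimodular graph height function: for every graph height function (h',Γ) on GP there exist vertices u, v with v in the Γ-orbit of u and |Γ_u v| ≠ |Γ_v u|. -/
open Filter Finset

noncomputable section

variable {V : Type*}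

/-- Vertices of the Grandparent graph: pairs `(k, f)` where `f i = false` for `i ≥ k`
and for all sufficiently small `i`. -/
def GPVertex : Type :=
  {p : ℤ × (ℤ → Bool) // (∀ i, p.1 ≤ i → p.2 i = false) ∧ ∃ N : ℤ, ∀ i ≤ N, p.2 i = false}

/-- The predecessor map of the Grandparent graph. -/
def GPpred (v : GPVertex) : GPVertex :=
  ⟨(v.val.1 - 1, fun i => if i = v.val.1 - 1 then false else v.val.2 i), by
    constructor
    · intro i hi
      dsimp only at hi ⊢
      split
      · rfl
      · exact v.prop.1 i (by omega)
    · obtain ⟨N, hN⟩ := v.prop.2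
      refine ⟨N, fun i hi => ?_⟩
      dsimp only
      split
      · rfl
      · exact hN i hi⟩

/-- The Grandparent graph. -/
def GP : SimpleGraph GPVertex where
  Adj u v := u ≠ v ∧
    (u = GPpred v ∨ v = GPpred u ∨ u = GPpred (GPpred v) ∨ v = GPpred (GPpred u))
  symm := by
    constructor
    intro u v hv
    exact ⟨Ne.symm hv.1, by tauto⟩
  loopless := by
    constructor
    intro u hu
    exact hu.1 rfl

/-- The height of a vertex of the Grandparent graph. -/
def GPheight (v : GPVertex) : ℤ := v.val.1

/-!
Every automorphism of `GP` commutes with the predecessor map `p`, since `p` can be read off the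
adjacency structure: an edge `{p v, v}` lies in three triangles and an edge `{p (p v), v}` in one,
and among the neighbours of `v` along edges of the first kind only `p v` is adjacent to all the
others.

Call `w` periodic if `γ w = p^[d] w` for some `γ ∈ Γ` and `d > 0`. The stabiliser of `w` then
fixes `p^[d] w`, a vertex of the orbit of `w`, so unimodularity forces the stabiliser of
`p^[d] w` to fix `w`. Passing to a common period, it follows that two periodic vertices with the
same parent coincide. On the other hand, quasi-transitivity and the pigeonhole principle along a
descending ray make every vertex periodic, in particular both children of a vertex.
-/

namespace SimpleGraph

variable {W : Type*} (G : SimpleGraph V)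

def ThickAdj (u v : V) : Prop := G.Adj u v ∧ (G.commonNeighbors u v).Nontrivial

def IsThickParent (u v : V) : Prop :=
  G.ThickAdj u v ∧ ∀ w, G.ThickAdj v w → w ≠ u → G.Adj u w

variable {G} {G' : SimpleGraph W}

lemma ThickAdj.symm {u v : V} (h : G.ThickAdj u v) : G.ThickAdj v u :=
  ⟨h.1.symm, by rw [commonNeighbors_symm]; exact h.2⟩

lemma ThickAdj.map (γ : G ≃g G') {u v : V} (h : G.ThickAdj u v) : G'.ThickAdj (γ u) (γ v) := by
  refine ⟨γ.map_adj_iff.mpr h.1, (h.2.image γ.injective).mono ?_⟩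
  rintro _ ⟨x, hx, rfl⟩
  simp only [mem_commonNeighbors, Iso.map_adj_iff] at hx ⊢
  exact hx

lemma Iso.thickAdj_iff (γ : G ≃g G') {u v : V} : G'.ThickAdj (γ u) (γ v) ↔ G.ThickAdj u v :=
  ⟨fun h => by simpa using h.map γ.symm, fun h => h.map γ⟩

lemma IsThickParent.map (γ : G ≃g G') {u v : V} (h : G.IsThickParent u v) :
    G'.IsThickParent (γ u) (γ v) := by
  refine ⟨h.1.map γ, fun w hw hwu => ?_⟩
  obtain ⟨w, rfl⟩ := γ.surjective w
  exact γ.map_adj_iff.mpr (h.2 w (γ.thickAdj_iff.mp hw) fun h => hwu (congrArg γ h))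

end SimpleGraph

namespace GPVertex

instance : Inhabited GPVertex := ⟨⟨(0, fun _ => false), fun _ _ => rfl, 0, fun _ _ => rfl⟩⟩

def child (v : GPVertex) (b : Bool) : GPVertex :=
  ⟨(v.val.1 + 1, Function.update v.val.2 v.val.1 b), by
    obtain ⟨hk, N, hN⟩ := v.prop
    refine ⟨fun i hi => ?_, min N (v.val.1 - 1), fun i hi => ?_⟩ <;> dsimp only at hi ⊢
    · rw [Function.update_of_ne (by omega)]
      exact hk i (by omega)
    · rw [Function.update_of_ne (by omega)]
      exact hN i (by omega)⟩

@[simp]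
lemma height_pred (v : GPVertex) : GPheight (GPpred v) = GPheight v - 1 := rfl

@[simp]
lemma height_child (v : GPVertex) (b : Bool) : GPheight (child v b) = GPheight v + 1 := rfl

lemma ne_of_height_ne {u v : GPVertex} (h : GPheight u ≠ GPheight v) : u ≠ v :=
  fun huv => h (congrArg GPheight huv)

lemma pred_child (v : GPVertex) (b : Bool) : GPpred (child v b) = v := by
  refine Subtype.ext (Prod.ext (by simp [GPpred, child]) (funext fun i => ?_))
  by_cases hi : i = v.val.1
  · subst hi
    simp [GPpred, child, v.prop.1 _ le_rfl]
  · simp [GPpred, child, hi]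

lemma child_false_ne_true (v : GPVertex) : child v false ≠ child v true := by
  intro h
  simpa [child] using congrArg (fun u : GPVertex => u.val.2 v.val.1) h

end GPVertex

open GPVertex

namespace GP

lemma height_sub_of_adj {u v : GPVertex} (h : GP.Adj u v) :
    GPheight u - GPheight v ∈ ({-1, 1, -2, 2} : Set ℤ) := by
  rcases h.2 with rfl | rfl | rfl | rfl <;> simp <;> omega

lemma adj_pred (v : GPVertex) : GP.Adj (GPpred v) v :=
  ⟨ne_of_height_ne (by simp), Or.inl rfl⟩

lemma adj_pred_pred (v : GPVertex) : GP.Adj (GPpred (GPpred v)) v :=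
  ⟨ne_of_height_ne (by simp; omega), Or.inr (Or.inr (Or.inl rfl))⟩

lemma adj_child (v : GPVertex) (b : Bool) : GP.Adj v (child v b) := by
  simpa [pred_child] using adj_pred (child v b)

lemma adj_pred_child (v : GPVertex) (b : Bool) : GP.Adj (GPpred v) (child v b) := by
  simpa [pred_child] using adj_pred_pred (child v b)

lemma eq_pred_of_adj_of_height_eq {u v : GPVertex} (h : GP.Adj u v)
    (hh : GPheight u = GPheight v - 1) : u = GPpred v := by
  rcases h.2 with h | rfl | rfl | rfl
  · exact h
  all_goals simp at hh <;> omega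

lemma eq_pred_of_adj_of_adj_pred_pred {v w : GPVertex} (hw : GP.Adj w v)
    (hw' : GP.Adj w (GPpred (GPpred v))) : w = GPpred v := by
  have h1 := height_sub_of_adj hw
  have h2 := height_sub_of_adj hw'
  simp only [height_pred, Set.mem_insert_iff, Set.mem_singleton_iff] at h1 h2
  exact eq_pred_of_adj_of_height_eq hw (by omega)

lemma thickAdj_pred (v : GPVertex) : GP.ThickAdj (GPpred v) v :=
  ⟨adj_pred v, child v false, ⟨adj_pred_child v false, adj_child v false⟩,
    child v true, ⟨adj_pred_child v true, adj_child v true⟩, child_false_ne_true v⟩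

lemma not_thickAdj_pred_pred (v : GPVertex) : ¬ GP.ThickAdj (GPpred (GPpred v)) v := by
  rintro ⟨-, x, ⟨hx, hx'⟩, y, ⟨hy, hy'⟩, hxy⟩
  exact hxy ((eq_pred_of_adj_of_adj_pred_pred hx'.symm hx.symm).trans
    (eq_pred_of_adj_of_adj_pred_pred hy'.symm hy.symm).symm)

lemma thickAdj_iff {u v : GPVertex} : GP.ThickAdj u v ↔ u = GPpred v ∨ v = GPpred u := by
  refine ⟨fun h => ?_, ?_⟩
  · rcases h.1.2 with h' | h' | rfl | rfl
    · exact Or.inl h'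
    · exact Or.inr h'
    · exact absurd h (not_thickAdj_pred_pred v)
    · exact absurd h.symm (not_thickAdj_pred_pred u)
  · rintro (rfl | rfl)
    exacts [thickAdj_pred v, (thickAdj_pred u).symm]

lemma isThickParent_iff {u v : GPVertex} : GP.IsThickParent u v ↔ u = GPpred v := by
  refine ⟨fun ⟨huv, hdom⟩ => ?_, ?_⟩
  · refine (thickAdj_iff.mp huv).resolve_right ?_
    rintro rfl
    -- a sibling of `u` is a thick neighbour of `v` at the height of `u`, so not adjacent to `u`
    obtain ⟨b, hb⟩ : ∃ b, child (GPpred u) b ≠ u := by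
      by_contra! h
      exact child_false_ne_true _ ((h false).trans (h true).symm)
    have hadj := height_sub_of_adj (hdom _ (thickAdj_iff.mpr (Or.inl (pred_child _ b).symm)) hb)
    simp at hadj
  · rintro rfl
    refine ⟨thickAdj_pred v, fun w hw hwu => ?_⟩
    obtain rfl : v = GPpred w := (thickAdj_iff.mp hw).resolve_right hwu
    exact adj_pred_pred w

lemma _root_.SimpleGraph.Iso.map_GPpred (γ : GP ≃g GP) (v : GPVertex) :
    γ (GPpred v) = GPpred (γ v) :=
  isThickParent_iff.mp ((isThickParent_iff.mpr rfl).map γ)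

lemma _root_.SimpleGraph.Iso.map_iterate_GPpred (γ : GP ≃g GP) (n : ℕ) (v : GPVertex) :
    γ (GPpred^[n] v) = GPpred^[n] (γ v) :=
  Function.Commute.iterate_right (f := γ) (fun v => γ.map_GPpred v) n v

end GP

section Unimodular

variable {G : SimpleGraph V}

def IsUnimodular (Γ : Subgroup (G ≃g G)) : Prop :=
  ∀ u v : V, (∃ γ ∈ Γ, γ u = v) →
    Nat.card {w : V | ∃ γ ∈ Γ, γ u = u ∧ γ v = w} =
      Nat.card {w : V | ∃ γ ∈ Γ, γ v = v ∧ γ u = w}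

variable {Γ : Subgroup (G ≃g G)}

lemma IsUnimodular.apply_eq_self_of_stabilizer_fixes (hΓ : IsUnimodular Γ) {u v : V}
    (huv : ∃ γ ∈ Γ, γ u = v) (hfix : ∀ γ ∈ Γ, γ u = u → γ v = v) {δ : G ≃g G} (hδ : δ ∈ Γ)
    (hδv : δ v = v) : δ u = u := by
  have horbit : {w : V | ∃ γ ∈ Γ, γ u = u ∧ γ v = w} = {v} := by
    ext w
    constructor
    · rintro ⟨γ, hγ, hγu, rfl⟩
      exact hfix γ hγ hγu
    · rintro rfl
      exact ⟨1, one_mem Γ, rfl, rfl⟩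
  have hcard := hΓ u v huv
  rw [horbit, Nat.card_unique] at hcard
  have := (Nat.card_eq_one_iff_unique.mp hcard.symm).1
  exact congrArg Subtype.val
    (Subsingleton.elim (α := {w : V | ∃ γ ∈ Γ, γ v = v ∧ γ u = w})
      ⟨δ u, δ, hδ, hδv, rfl⟩ ⟨u, 1, one_mem Γ, rfl, rfl⟩)

lemma QuasiTransitiveSub.exists_lt_apply_eq (hΓ : QuasiTransitiveSub G Γ) (f : ℕ → V) :
    ∃ a b, a < b ∧ ∃ γ ∈ Γ, γ (f a) = f b := by
  obtain ⟨S, hS⟩ := hΓ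
  choose γ hγ s hs hγs using fun n => hS (f n)
  obtain ⟨a, b, hab, hsab⟩ := Finite.exists_ne_map_eq_of_infinite fun n => (⟨s n, hs n⟩ : S)
  have hsab : s a = s b := congrArg Subtype.val hsab
  have key : ∀ m n, s m = s n → ∃ γ' ∈ Γ, γ' (f m) = f n := fun m n hmn =>
    ⟨γ n * (γ m)⁻¹, mul_mem (hγ n) (inv_mem (hγ m)), by
      rw [RelIso.mul_apply, ← hγs m, RelIso.inv_apply_self, hmn, hγs n]⟩
  rcases hab.lt_or_gt with h | h
  exacts [⟨a, b, h, key a b hsab⟩, ⟨b, a, h, key b a hsab.symm⟩]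

end Unimodular

namespace GP

variable {Γ : Subgroup (GP ≃g GP)} {d : ℕ} {w : GPVertex}

def IsPeriodic (Γ : Subgroup (GP ≃g GP)) (d : ℕ) (w : GPVertex) : Prop :=
  ∃ γ ∈ Γ, γ w = GPpred^[d] w

lemma IsPeriodic.iterate_pred (h : IsPeriodic Γ d w) (n : ℕ) :
    IsPeriodic Γ d (GPpred^[n] w) := by
  obtain ⟨γ, hγ, hγw⟩ := h
  exact ⟨γ, hγ, by
    rw [γ.map_iterate_GPpred, hγw, Function.Commute.iterate_iterate_self GPpred n d w]⟩

lemma IsPeriodic.const_mul (h : IsPeriodic Γ d w) (k : ℕ) : IsPeriodic Γ (k * d) w := by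
  obtain ⟨γ, hγ, hγw⟩ := h
  refine ⟨γ ^ k, pow_mem hγ k, ?_⟩
  induction k with
  | zero => simp
  | succ k ih =>
    rw [pow_succ', RelIso.mul_apply, ih, γ.map_iterate_GPpred, hγw, ← Function.iterate_add_apply,
      Nat.succ_mul]

lemma _root_.IsUnimodular.eq_of_isPeriodic (hΓ : IsUnimodular Γ) (h : IsPeriodic Γ d w)
    {δ : GP ≃g GP} (hδ : δ ∈ Γ) (hδw : GPpred^[d] (δ w) = GPpred^[d] w) : δ w = w :=
  hΓ.apply_eq_self_of_stabilizer_fixes h (fun γ _ hγw => by rw [γ.map_iterate_GPpred, hγw]) hδ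
    (by rw [δ.map_iterate_GPpred, hδw])

lemma _root_.IsUnimodular.eq_of_isPeriodic_of_pred_eq (hΓ : IsUnimodular Γ) {d₁ d₂ : ℕ}
    {w₁ w₂ : GPVertex} (h₁ : IsPeriodic Γ d₁ w₁) (h₂ : IsPeriodic Γ d₂ w₂) (hd₁ : 0 < d₁)
    (hd₂ : 0 < d₂) (hpred : GPpred w₁ = GPpred w₂) : w₁ = w₂ := by
  obtain ⟨γ₁, hγ₁, e₁⟩ := h₁.const_mul d₂
  obtain ⟨γ₂, hγ₂, e₂⟩ := h₂.const_mul d₁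
  rw [mul_comm] at e₂
  have hanc : GPpred^[d₂ * d₁] w₁ = GPpred^[d₂ * d₁] w₂ := by
    obtain ⟨n, hn⟩ := Nat.exists_eq_succ_of_ne_zero (Nat.mul_pos hd₂ hd₁).ne'
    rw [hn, Function.iterate_succ_apply, Function.iterate_succ_apply, hpred]
  have hδ : (γ₂⁻¹ * γ₁) w₁ = w₂ := by
    rw [RelIso.mul_apply, e₁, hanc, ← e₂, RelIso.inv_apply_self]
  rw [← hδ]
  exact (hΓ.eq_of_isPeriodic (h₁.const_mul d₂) (mul_mem (inv_mem hγ₂) hγ₁)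
    (by rw [hδ, hanc])).symm

lemma exists_isPeriodic (hΓ : QuasiTransitiveSub GP Γ) (v : GPVertex) :
    ∃ d, 0 < d ∧ IsPeriodic Γ d v := by
  set f : ℕ → GPVertex := fun n => (child · false)^[n] v
  have hf : ∀ m n, GPpred^[m] (f (m + n)) = f n := fun m n => by
    rw [show f (m + n) = (child · false)^[m] (f n) from Function.iterate_add_apply _ m n v]
    exact (Function.LeftInverse.iterate (fun u => pred_child u false) m) (f n)
  obtain ⟨a, b, hab, γ, hγ, e⟩ := hΓ.exists_lt_apply_eq f
  have hper : IsPeriodic Γ (b - a) (f a) := by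
    refine ⟨γ⁻¹, inv_mem hγ, γ.injective ?_⟩
    rw [RelIso.apply_inv_self, γ.map_iterate_GPpred, e, ← hf (b - a) a, Nat.sub_add_cancel hab.le]
  have hv : GPpred^[a] (f a) = v := hf a 0
  exact ⟨b - a, by omega, hv ▸ hper.iterate_pred a⟩

theorem not_isUnimodular (hΓ : QuasiTransitiveSub GP Γ) : ¬ IsUnimodular Γ := by
  intro hunimod
  let v : GPVertex := default
  obtain ⟨d₀, hd₀, h₀⟩ := exists_isPeriodic hΓ (child v false)
  obtain ⟨d₁, hd₁, h₁⟩ := exists_isPeriodic hΓ (child v true)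
  exact child_false_ne_true v
    (hunimod.eq_of_isPeriodic_of_pred_eq h₀ h₁ hd₀ hd₁ (by rw [pred_child, pred_child]))

end GP

/-- `GP` admits no unimodular graph height function: for every graph
height function `(h', Γ)` on `GP` there are vertices `u`, `v` with `v` in the `Γ`-orbit
of `u` and `|Γ_u v| ≠ |Γ_v u|`. -/
theorem statement_14 (h' : GPVertex → ℤ) (Γ : Subgroup (GP ≃g GP))
    (hghf : IsGraphHeightFunction GP h' Γ) :
    ∃ u v : GPVertex, (∃ γ ∈ Γ, γ u = v) ∧
      Nat.card {w : GPVertex | ∃ γ ∈ Γ, γ u = u ∧ γ v = w} ≠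
        Nat.card {w : GPVertex | ∃ γ ∈ Γ, γ v = v ∧ γ u = w} := by
  by_contra hunimod
  push Not at hunimod
  exact GP.not_isUnimodular hghf.1 hunimod
end
end
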